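/- arXiv:1612.06078 — 3 statements merged into one kernel-verified Lean document; each statement's English description precedes it below -/
import Mathlib

section
/- Let $K$ be a compact topological space, $\alpha \in [0,1)$ and $\varepsilon > 0$. Suppose $(v_i)_{i \in \mathbb{N}}$ is a sequence of continuous functions $v_i : K \to \mathbb{R}$ with $0 \le v_i \le 1$ on $K$ and $\limsup_{i\to\infty} v_i(x) \le \alpha$ for every $x \in K$. Then there exist finitely many indices $i_1,\dots,i_N$ and nonnegative coefficients $\lambda_1,\dots,\lambda_N$ summing to $1$ such that the convex combination $\widehat v = \sum_{j=1}^N \lambda_j v_{i_j}$ satisfies $\widehat v(x) \le \alpha + \varepsilon$ for every $x \in K$. -/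
open Filter MeasureTheory Topology Set
open scoped CompactlySupported

/-! If no convex combination of the `v i` lies below `α + ε`, Hahn–Banach separates the convex
hull of the `v i` from the open convex set of functions `< α + ε` by a functional `φ` and a level
`u`; `φ` is monotone since that set is a lower set. By Riesz–Markov–Kakutani, `φ` is integration
against a finite measure, and `v i ⊔ α → α` pointwise, so dominated convergence gives
`φ (v i ⊔ α) → φ α < u`, while `u ≤ φ (v i) ≤ φ (v i ⊔ α)`. -/

theorem LinearMap.monotone_of_isLowerSet_of_bddAbove {E : Type*} [AddCommGroup E] [PartialOrder E]
    [IsOrderedAddMonoid E] [Module ℝ E] [PosSMulMono ℝ E] (φ : E →ₗ[ℝ] ℝ) {s : Set E}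
    (hs : IsLowerSet s) (hne : s.Nonempty) (hbdd : BddAbove (φ '' s)) : Monotone φ := by
  obtain ⟨a, ha⟩ := hne
  obtain ⟨M, hM⟩ := hbdd
  intro f g hfg
  by_contra! hlt
  have hd : 0 < φ f - φ g := sub_pos.mpr hlt
  set t : ℝ := (M - φ a + 1) / (φ f - φ g)
  have hMa : φ a ≤ M := hM ⟨a, ha, rfl⟩
  have ht : 0 ≤ t := div_nonneg (by linarith) hd.le
  have hmem : a - t • (g - f) ∈ s :=
    hs (sub_le_self _ (smul_nonneg ht (sub_nonneg.mpr hfg))) ha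
  have hval : φ (a - t • (g - f)) = M + 1 := by
    simp only [map_sub, map_smul, smul_eq_mul, t]
    field_simp
    ring
  linarith [hM ⟨_, hmem, rfl⟩]

theorem Filter.tendsto_max_of_limsup_le {ι β : Type*} [ConditionallyCompleteLinearOrder β]
    [TopologicalSpace β] [OrderTopology β] {l : Filter ι} {u : ι → β} {a : β}
    (hu : IsBoundedUnder (· ≤ ·) l u) (h : limsup u l ≤ a) :
    Tendsto (fun i => max (u i) a) l (𝓝 a) := by
  refine tendsto_order.2 ⟨fun b hb => Eventually.of_forall fun _ => lt_max_of_lt_right hb,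
    fun b hb => ?_⟩
  exact (eventually_lt_of_limsup_lt (h.trans_lt hb) hu).mono fun _ hi => max_lt hi hb

theorem MeasureTheory.tendsto_integral_max_of_limsup_le {X : Type*} [MeasurableSpace X]
    {μ : Measure X} [IsFiniteMeasure μ] {F : ℕ → X → ℝ} {a C : ℝ}
    (hF : ∀ n, AEStronglyMeasurable (F n) μ) (hle : ∀ n x, F n x ≤ C)
    (hlim : ∀ x, limsup (fun n => F n x) atTop ≤ a) :
    Tendsto (fun n => ∫ x, max (F n x) a ∂μ) atTop (𝓝 (∫ _, a ∂μ)) := by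
  refine tendsto_integral_of_dominated_convergence (fun _ => max |C| |a|)
    (fun n => (hF n).sup aestronglyMeasurable_const) (integrable_const _)
    (fun n => Eventually.of_forall fun x => ?_)
    (Eventually.of_forall fun x =>
      tendsto_max_of_limsup_le (isBoundedUnder_of ⟨C, fun n => hle n x⟩) (hlim x))
  rw [Real.norm_eq_abs, abs_le]
  constructor
  · linarith [neg_abs_le a, le_max_right |C| |a|, le_max_right (F n x) a]
  · exact max_le ((hle n x).trans ((le_abs_self C).trans (le_max_left _ _)))
      ((le_abs_self a).trans (le_max_right _ _))

theorem ContinuousMap.exists_isFiniteMeasure_integral_eq {X : Type*} [TopologicalSpace X]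
    [CompactSpace X] [T2Space X] [MeasurableSpace X] [BorelSpace X] (φ : C(X, ℝ) →ₗ[ℝ] ℝ)
    (hφ : Monotone φ) : ∃ μ : Measure X, IsFiniteMeasure μ ∧ ∀ f : C(X, ℝ), ∫ x, f x ∂μ = φ f := by
  let Λ : C_c(X, ℝ) →ₚ[ℝ] ℝ :=
    { toFun f := φ f.toContinuousMap
      map_add' f g := map_add φ f.toContinuousMap g.toContinuousMap
      map_smul' c f := map_smul φ c f.toContinuousMap
      monotone' f g hfg := hφ hfg }
  exact ⟨RealRMK.rieszMeasure Λ, inferInstance, fun f =>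
    RealRMK.integral_rieszMeasure Λ (CompactlySupportedContinuousMap.continuousMapEquiv f)⟩

namespace ContinuousMap

variable {K : Type*} [TopologicalSpace K]

theorem isOpen_setOf_forall_lt [CompactSpace K] (c : ℝ) :
    IsOpen {f : C(K, ℝ) | ∀ x, f x < c} := by
  simpa [MapsTo] using isOpen_setOfPred_mapsTo isCompact_univ (isOpen_Iio (a := c))

theorem convex_setOf_forall_lt (c : ℝ) : Convex ℝ {f : C(K, ℝ) | ∀ x, f x < c} := by
  intro f hf g hg a b ha hb hab x
  simp only [add_apply, smul_apply, smul_eq_mul]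
  exact Convex.combo_self hab c ▸ (convex_Iio c) (hf x) (hg x) ha hb hab

theorem isLowerSet_setOf_forall_lt (c : ℝ) : IsLowerSet {f : C(K, ℝ) | ∀ x, f x < c} :=
  fun _ _ hgf hf x => (hgf x).trans_lt (hf x)

end ContinuousMap

theorem exists_fin_of_mem_convexHull_range {R E ι : Type*} [Field R] [LinearOrder R]
    [IsStrictOrderedRing R] [AddCommGroup E] [Module R E] {v : ι → E} {f : E}
    (hf : f ∈ convexHull R (range v)) :
    ∃ (N : ℕ) (idx : Fin N → ι) (lam : Fin N → R),
      (∀ j, 0 ≤ lam j) ∧ ∑ j, lam j = 1 ∧ ∑ j, lam j • v (idx j) = f := by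
  obtain ⟨κ, _, w, z, hw0, hw1, hz, rfl⟩ := mem_convexHull_iff_exists_fintype.mp hf
  choose idx hidx using hz
  let e := (Fintype.equivFin κ).symm
  refine ⟨Fintype.card κ, idx ∘ e, w ∘ e, fun j => hw0 _, ?_, ?_⟩
  · simpa [Function.comp_def] using (e.sum_comp w).trans hw1
  · simpa [Function.comp_def, hidx] using e.sum_comp fun i => w i • z i

theorem stmt0_general {K : Type*} [TopologicalSpace K] [CompactSpace K] [T2Space K]
    (α ε : ℝ) (hε : 0 < ε)
    (v : ℕ → C(K, ℝ))
    (hv1 : ∀ i x, v i x ≤ 1)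
    (hlim : ∀ x, Filter.limsup (fun i => v i x) Filter.atTop ≤ α) :
    ∃ (N : ℕ) (idx : Fin N → ℕ) (lam : Fin N → ℝ),
      (∀ j, 0 ≤ lam j) ∧ (∑ j, lam j = 1) ∧
      ∀ x, ∑ j, lam j * v (idx j) x ≤ α + ε := by
  by_contra! h
  set s := {f : C(K, ℝ) | ∀ x, f x < α + ε}
  have hαs : ContinuousMap.const K α ∈ s := fun _ => lt_add_of_pos_right α hε
  have hdisj : Disjoint s (convexHull ℝ (range v)) := by
    refine disjoint_left.2 fun f hfs hf => ?_
    obtain ⟨N, idx, lam, hlam0, hlam1, rfl⟩ := exists_fin_of_mem_convexHull_range hf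
    obtain ⟨x, hx⟩ := h N idx lam hlam0 hlam1
    have hfx := hfs x
    simp only [ContinuousMap.coe_sum, Finset.sum_apply, ContinuousMap.coe_smul, Pi.smul_apply,
      smul_eq_mul] at hfx
    linarith
  obtain ⟨φ, u, hφs, hφv⟩ := geometric_hahn_banach_open (ContinuousMap.convex_setOf_forall_lt _)
    (ContinuousMap.isOpen_setOf_forall_lt _) (convex_convexHull ℝ _) hdisj
  have hφ : Monotone φ := φ.toLinearMap.monotone_of_isLowerSet_of_bddAbove
    (ContinuousMap.isLowerSet_setOf_forall_lt _) ⟨_, hαs⟩ ⟨u, by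
      rintro _ ⟨f, hf, rfl⟩; exact (hφs f hf).le⟩
  let _ : MeasurableSpace K := borel K
  have : BorelSpace K := ⟨rfl⟩
  obtain ⟨μ, _, hμ⟩ : ∃ μ : Measure K, IsFiniteMeasure μ ∧ ∀ f : C(K, ℝ), ∫ x, f x ∂μ = φ f :=
    ContinuousMap.exists_isFiniteMeasure_integral_eq φ.toLinearMap hφ
  have hconv : Tendsto (fun i => φ (v i ⊔ ContinuousMap.const K α)) atTop
      (𝓝 (φ (ContinuousMap.const K α))) := by
    simp only [← hμ, ContinuousMap.sup_apply, ContinuousMap.const_apply]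
    exact tendsto_integral_max_of_limsup_le (fun i => (v i).continuous.aestronglyMeasurable)
      hv1 hlim
  have hu : ∀ i, u ≤ φ (v i ⊔ ContinuousMap.const K α) := fun i =>
    (hφv _ (subset_convexHull ℝ _ ⟨i, rfl⟩)).trans (hφ le_sup_left)
  linarith [hφs _ hαs, ge_of_tendsto' hconv hu]

/-- If `(v i)` is a sequence of continuous functions on a compact space `K` with
`0 ≤ v i ≤ 1` and `limsup_i v i x ≤ α` for each `x ∈ K`, where `α ∈ [0,1)`, then for every
`ε > 0` some convex combination of the `v i` is bounded above by `α + ε` on all of `K`. -/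
theorem stmt0 {K : Type*} [TopologicalSpace K] [CompactSpace K] [T2Space K]
    (α ε : ℝ) (hα : α ∈ Set.Ico (0 : ℝ) 1) (hε : 0 < ε)
    (v : ℕ → C(K, ℝ))
    (hv0 : ∀ i x, 0 ≤ v i x) (hv1 : ∀ i x, v i x ≤ 1)
    (hlim : ∀ x, Filter.limsup (fun i => v i x) Filter.atTop ≤ α) :
    ∃ (N : ℕ) (idx : Fin N → ℕ) (lam : Fin N → ℝ),
      (∀ j, 0 ≤ lam j) ∧ (∑ j, lam j = 1) ∧
      ∀ x, ∑ j, lam j * v (idx j) x ≤ α + ε :=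
  stmt0_general α ε hε v hv1 hlim
end

section
/- Let $\nu$ be a function defined on the open subsets of a metric space $X$ with values in $[0,\infty]$ such that: $\nu(\emptyset)=0$; $\nu$ is monotone ($\nu(U_1)\le\nu(U_2)$ whenever $U_1 \subset U_2$ are open); $\nu(U_1\cup U_2)\le \nu(U_1)+\nu(U_2)$ for all open $U_1, U_2$; $\nu(U_1\cup U_2)\ge \nu(U_1)+\nu(U_2)$ whenever $U_1,U_2$ are disjoint open sets; and $\nu(U)=\sup\{\nu(V): V \text{ open}, \overline{V} \text{ compact}, \overline{V}\subset U\}$ for every open $U$. Then the extension of $\nu$ to all subsets of $X$ defined by $\nu(A):=\inf\{\nu(U): U \text{ open}, A \subset U\}$ is a Borel outer measure (i.e., a countably subadditive outer measure for which all Borel sets are Carathéodory measurable). -/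
/-!
Compactness of the closures in the inner regularity of `ν` upgrades finite subadditivity on open
sets to countable subadditivity, so the infimum over open supersets is the outer measure induced
by `ν` on the open sets. Metrically separated sets have disjoint open neighbourhoods, so
superadditivity of `ν` on disjoint open sets makes this outer measure metric, and Carathéodory's
criterion for metric outer measures makes every Borel set measurable.
-/

open MeasureTheory Set Metric
open scoped ENNReal

theorem Metric.AreSeparated.separatedNhds {X : Type*} [PseudoEMetricSpace X] {s t : Set X}
    (h : AreSeparated s t) : SeparatedNhds s t := by
  obtain ⟨r, hr0, hr⟩ := h
  refine ⟨{x | infEDist x s < r / 2}, {x | infEDist x t < r / 2},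
    isOpen_lt continuous_infEDist continuous_const, isOpen_lt continuous_infEDist continuous_const,
    fun x hx => by simpa [infEDist_zero_of_mem hx], fun x hx => by simpa [infEDist_zero_of_mem hx],
    disjoint_left.2 fun z hzs hzt => ?_⟩
  obtain ⟨x, hx, hzx⟩ := infEDist_lt_iff.1 hzs
  obtain ⟨y, hy, hzy⟩ := infEDist_lt_iff.1 hzt
  refine (hr x hx y hy).not_gt ?_
  calc edist x y ≤ edist z x + edist z y := edist_triangle_left x y z
    _ < r / 2 + r / 2 := ENNReal.add_lt_add hzx hzy
    _ = r := ENNReal.add_halves r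

theorem MeasureTheory.OuterMeasure.union_eq_add_of_separatedNhds {X : Type*} [TopologicalSpace X]
    (μ : OuterMeasure X) (hreg : ∀ A, μ A = ⨅ (U : Set X) (_ : IsOpen U) (_ : A ⊆ U), μ U)
    (hadd : ∀ U V : Set X, IsOpen U → IsOpen V → Disjoint U V → μ U + μ V ≤ μ (U ∪ V))
    {s t : Set X} (hst : SeparatedNhds s t) : μ (s ∪ t) = μ s + μ t := by
  refine le_antisymm (measure_union_le s t) ?_
  obtain ⟨V, W, hV, hW, hsV, htW, hVW⟩ := hst
  rw [hreg (s ∪ t)]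
  refine le_iInf₂ fun U hU => le_iInf fun hstU => ?_
  calc μ s + μ t ≤ μ (U ∩ V) + μ (U ∩ W) :=
        add_le_add (measure_mono (subset_inter (subset_union_left.trans hstU) hsV))
          (measure_mono (subset_inter (subset_union_right.trans hstU) htW))
    _ ≤ μ ((U ∩ V) ∪ (U ∩ W)) :=
        hadd _ _ (hU.inter hV) (hU.inter hW) (hVW.mono inter_subset_right inter_subset_right)
    _ ≤ μ U := measure_mono (union_subset inter_subset_left inter_subset_left)

namespace DeGiorgiLetta

variable {X : Type*} [TopologicalSpace X] {ν : Set X → ℝ≥0∞}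

theorem biUnion_finset_le_sum {ι : Type*} (h0 : ν ∅ = 0)
    (hsub : ∀ U V : Set X, IsOpen U → IsOpen V → ν (U ∪ V) ≤ ν U + ν V)
    (t : Finset ι) {U : ι → Set X} (hU : ∀ i, IsOpen (U i)) :
    ν (⋃ i ∈ t, U i) ≤ ∑ i ∈ t, ν (U i) := by
  classical
  induction t using Finset.induction with
  | empty => simp [h0]
  | insert a t ha ih =>
    rw [Finset.set_biUnion_insert, Finset.sum_insert ha]
    exact (hsub _ _ (hU a) (isOpen_biUnion fun i _ => hU i)).trans (add_le_add le_rfl ih)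

theorem iUnion_le_tsum {ι : Type*} (h0 : ν ∅ = 0)
    (hmono : ∀ U V : Set X, IsOpen U → IsOpen V → U ⊆ V → ν U ≤ ν V)
    (hsub : ∀ U V : Set X, IsOpen U → IsOpen V → ν (U ∪ V) ≤ ν U + ν V)
    (hinner : ∀ U : Set X, IsOpen U →
      ν U = ⨆ (V : Set X) (_ : IsOpen V) (_ : IsCompact (closure V)) (_ : closure V ⊆ U), ν V)
    {U : ι → Set X} (hU : ∀ i, IsOpen (U i)) : ν (⋃ i, U i) ≤ ∑' i, ν (U i) := by
  rw [hinner _ (isOpen_iUnion hU)]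
  refine iSup₂_le fun V hV => iSup₂_le fun hVc hVU => ?_
  obtain ⟨t, ht⟩ := hVc.elim_finite_subcover U hU hVU
  calc ν V ≤ ν (⋃ i ∈ t, U i) :=
        hmono _ _ hV (isOpen_biUnion fun i _ => hU i) (subset_closure.trans ht)
    _ ≤ ∑ i ∈ t, ν (U i) := biUnion_finset_le_sum h0 hsub t hU
    _ ≤ ∑' i, ν (U i) := ENNReal.sum_le_tsum t

variable (ν) in
noncomputable def outerMeasure (h0 : ν ∅ = 0) : OuterMeasure X :=
  inducedOuterMeasure (fun U (_ : IsOpen U) => ν U) isOpen_empty h0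

section

variable (h0 : ν ∅ = 0) (hmono : ∀ U V : Set X, IsOpen U → IsOpen V → U ⊆ V → ν U ≤ ν V)
  (hsub : ∀ U V : Set X, IsOpen U → IsOpen V → ν (U ∪ V) ≤ ν U + ν V)
  (hinner : ∀ U : Set X, IsOpen U →
    ν U = ⨆ (V : Set X) (_ : IsOpen V) (_ : IsCompact (closure V)) (_ : closure V ⊆ U), ν V)
include hmono hsub hinner

theorem outerMeasure_apply (A : Set X) :
    outerMeasure ν h0 A = ⨅ (U : Set X) (_ : IsOpen U) (_ : A ⊆ U), ν U :=
  inducedOuterMeasure_eq_iInf (fun _ hU => isOpen_iUnion hU)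
    (fun _ hU => iUnion_le_tsum h0 hmono hsub hinner hU)
    (fun _ _ => hmono _ _) A

theorem outerMeasure_apply_of_isOpen {U : Set X} (hU : IsOpen U) : outerMeasure ν h0 U = ν U :=
  inducedOuterMeasure_eq' (fun _ hU => isOpen_iUnion hU)
    (fun _ hU => iUnion_le_tsum h0 hmono hsub hinner hU)
    (fun _ _ => hmono _ _) hU

theorem outerMeasure_union_of_separatedNhds
    (hadd : ∀ U V : Set X, IsOpen U → IsOpen V → Disjoint U V → ν U + ν V ≤ ν (U ∪ V))
    {s t : Set X} (hst : SeparatedNhds s t) :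
    outerMeasure ν h0 (s ∪ t) = outerMeasure ν h0 s + outerMeasure ν h0 t := by
  refine (outerMeasure ν h0).union_eq_add_of_separatedNhds (fun A => ?_)
    (fun U V hU hV hUV => ?_) hst
  · rw [outerMeasure_apply h0 hmono hsub hinner]
    refine iInf_congr fun U => iInf_congr fun hU => ?_
    rw [outerMeasure_apply_of_isOpen h0 hmono hsub hinner hU]
  · simp only [outerMeasure_apply_of_isOpen h0 hmono hsub hinner, hU, hV, hU.union hV]
    exact hadd U V hU hV hUV

end

end DeGiorgiLetta

/-- De Giorgi–Letta: a set function `ν` on the open subsets of a metric space `X` that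
vanishes on `∅`, is monotone, subadditive, superadditive on disjoint open sets, and inner
regular by open sets with compact closure, extends (by infimum over open supersets) to a
Borel outer measure: the extension vanishes on `∅`, is monotone, countably subadditive, and
every Borel set is Carathéodory measurable for it. -/
theorem stmt5 {X : Type*} [MetricSpace X] [MeasurableSpace X] [BorelSpace X]
    (ν : Set X → ℝ≥0∞) (h0 : ν ∅ = 0)
    (hmono : ∀ U V : Set X, IsOpen U → IsOpen V → U ⊆ V → ν U ≤ ν V)
    (hsub : ∀ U V : Set X, IsOpen U → IsOpen V → ν (U ∪ V) ≤ ν U + ν V)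
    (hadd : ∀ U V : Set X, IsOpen U → IsOpen V → Disjoint U V → ν U + ν V ≤ ν (U ∪ V))
    (hinner : ∀ U : Set X, IsOpen U →
      ν U = ⨆ (V : Set X) (_ : IsOpen V) (_ : IsCompact (closure V)) (_ : closure V ⊆ U), ν V) :
    let ext : Set X → ℝ≥0∞ := fun A => ⨅ (U : Set X) (_ : IsOpen U) (_ : A ⊆ U), ν U
    ext ∅ = 0 ∧
    (∀ A B : Set X, A ⊆ B → ext A ≤ ext B) ∧
    (∀ s : ℕ → Set X, ext (⋃ i, s i) ≤ ∑' i, ext (s i)) ∧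
    (∀ s : Set X, MeasurableSet s → ∀ t : Set X, ext t = ext (t ∩ s) + ext (t \ s)) := by
  intro ext
  set μ := DeGiorgiLetta.outerMeasure ν h0
  have hext : ext = ⇑μ :=
    funext fun A => (DeGiorgiLetta.outerMeasure_apply h0 hmono hsub hinner A).symm
  have hmetric : μ.IsMetric := fun s t hst =>
    DeGiorgiLetta.outerMeasure_union_of_separatedNhds h0 hmono hsub hinner hadd hst.separatedNhds
  rw [hext]
  refine ⟨measure_empty, fun A B => measure_mono, measure_iUnion_le, fun s hs => ?_⟩
  exact hmetric.borel_le_caratheodory s (BorelSpace.measurable_eq (α := X) ▸ hs)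
end

section
/- Let $(X, d, \mu)$ be a metric measure space and $\Omega$ a $\mu$-measurable set. For $u \in L^1_{loc}$, suppose the approximate lower and upper limits $u^\wedge(x)$ and $u^\vee(x)$ at a point $x$ both exist and are finite, and suppose both the interior trace $T_+u(x)$ with respect to $\Omega$ and the exterior trace $T_-u(x)$ with respect to $X\setminus\Omega$ exist at $x$, where $x$ is a point at which both $\Omega$ and its complement have positive lower density. Then $\{u^\wedge(x), u^\vee(x)\} = \{T_-u(x), T_+u(x)\}$ as sets. -/
open Filter MeasureTheory Metric Set
open scoped ENNReal

/-- The set of levels `t` such that `{u < t}` has density 0 at `x`; the lower approximate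
limit `u^∧(x)` is its supremum. -/
def lowerLevelSet {X : Type*} [PseudoMetricSpace X] [MeasurableSpace X]
    (μ : Measure X) (u : X → ℝ) (x : X) : Set ℝ :=
  {t : ℝ | Filter.Tendsto
    (fun r : ℝ => μ (Metric.ball x r ∩ {y | u y < t}) / μ (Metric.ball x r))
    (nhdsWithin 0 (Set.Ioi 0)) (nhds 0)}

/-- The set of levels `t` such that `{u > t}` has density 0 at `x`; the upper approximate
limit `u^∨(x)` is its infimum. -/
def upperLevelSet {X : Type*} [PseudoMetricSpace X] [MeasurableSpace X]
    (μ : Measure X) (u : X → ℝ) (x : X) : Set ℝ :=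
  {t : ℝ | Filter.Tendsto
    (fun r : ℝ => μ (Metric.ball x r ∩ {y | t < u y}) / μ (Metric.ball x r))
    (nhdsWithin 0 (Set.Ioi 0)) (nhds 0)}

open scoped Topology

/-!
Chebyshev's inequality turns a one-sided trace `T` into density-zero statements: relative to
the side it is taken on, `u` has density zero above every `t > T` and below every `t < T`.
Hence the level set `{u > t}` has density zero in small balls once `t > max T₋ T₊`, and the set
`{u < t}` once `t < min T₋ T₊`. Conversely, if `{u > t}` had density zero in balls for some
`t < T₊`, then also `{u ≤ t}` would have density zero in `B(x, r) ∩ Ω`, so `Ω` itself would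
have density zero at `x`, contradicting its positive lower density. Therefore
`u^∨(x) = max T₋ T₊` and `u^∧(x) = min T₋ T₊`.
-/

section

variable {X ι : Type*} [MeasurableSpace X]

def HasDensityZero (μ : Measure X) (l : Filter ι) (S : ι → Set X) (P : Set X) : Prop :=
  Tendsto (fun i => μ (S i ∩ P) / μ (S i)) l (𝓝 0)

def HasTrace (μ : Measure X) (l : Filter ι) (S : ι → Set X) (u : X → ℝ) (T : ℝ) : Prop :=
  Tendsto (fun i => (∫⁻ y in S i, ENNReal.ofReal |u y - T| ∂μ) / μ (S i)) l (𝓝 0)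

variable {μ : Measure X} {l : Filter ι} {S : ι → Set X} {P A Q : Set X}

theorem HasDensityZero.mono (h : HasDensityZero μ l S Q) (hPQ : P ⊆ Q) :
    HasDensityZero μ l S P :=
  tendsto_of_tendsto_of_tendsto_of_le_of_le (g := fun _ => 0) tendsto_const_nhds h
    (fun _ => zero_le) fun _ => by gcongr

theorem HasDensityZero.of_inter_of_diff (h₁ : HasDensityZero μ l (fun i => S i ∩ A) P)
    (h₂ : HasDensityZero μ l (fun i => S i \ A) P) : HasDensityZero μ l S P := by
  unfold HasDensityZero at *
  refine tendsto_of_tendsto_of_tendsto_of_le_of_le tendsto_const_nhds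
    (by simpa using h₁.add h₂) (fun _ => zero_le) fun i => ?_
  calc μ (S i ∩ P) / μ (S i)
      ≤ (μ (S i ∩ A ∩ P) + μ (S i \ A ∩ P)) / μ (S i) := by
        gcongr
        refine (measure_mono ?_).trans (measure_union_le _ _)
        rw [← union_inter_distrib_right, inter_union_sdiff]
    _ = μ (S i ∩ A ∩ P) / μ (S i) + μ (S i \ A ∩ P) / μ (S i) :=
        ENNReal.div_add_div_same.symm
    _ ≤ μ (S i ∩ A ∩ P) / μ (S i ∩ A) + μ (S i \ A ∩ P) / μ (S i \ A) := by
        gcongr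
        exacts [inter_subset_left, sdiff_subset]

theorem HasDensityZero.of_compl_of_inter (hQ : MeasurableSet Q) (hc : HasDensityZero μ l S Qᶜ)
    (h : HasDensityZero μ l (fun i => S i ∩ A) Q) : HasDensityZero μ l S A := by
  unfold HasDensityZero at *
  refine tendsto_of_tendsto_of_tendsto_of_le_of_le tendsto_const_nhds
    (by simpa using h.add hc) (fun _ => zero_le) fun i => ?_
  calc μ (S i ∩ A) / μ (S i)
      = μ (S i ∩ A ∩ Q) / μ (S i) + μ ((S i ∩ A) \ Q) / μ (S i) := by
        rw [ENNReal.div_add_div_same, measure_inter_add_sdiff _ hQ]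
    _ ≤ μ (S i ∩ A ∩ Q) / μ (S i ∩ A) + μ (S i ∩ Qᶜ) / μ (S i) := by
        gcongr
        · exact inter_subset_left
        · exact fun y hy => ⟨hy.1.1, hy.2⟩

theorem hasDensityZero_of_tendsto_setLIntegral_div {f : X → ℝ≥0∞} (hf : AEMeasurable f μ)
    {ε : ℝ≥0∞} (hε₀ : ε ≠ 0) (hε : ε ≠ ∞)
    (h : Tendsto (fun i => (∫⁻ y in S i, f y ∂μ) / μ (S i)) l (𝓝 0)) :
    HasDensityZero μ l S {y | ε ≤ f y} := by
  have hlim : Tendsto (fun i => (∫⁻ y in S i, f y ∂μ) / μ (S i) / ε) l (𝓝 0) := by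
    simpa using ENNReal.Tendsto.div_const h (Or.inr hε₀)
  refine tendsto_of_tendsto_of_tendsto_of_le_of_le tendsto_const_nhds hlim
    (fun _ => zero_le) fun i => ?_
  calc μ (S i ∩ {y | ε ≤ f y}) / μ (S i)
      ≤ (∫⁻ y in S i, f y ∂μ) / ε / μ (S i) := by
        gcongr
        rw [inter_comm]
        exact (Measure.le_restrict_apply _ _).trans
          (meas_ge_le_lintegral_div hf.restrict hε₀ hε)
    _ = (∫⁻ y in S i, f y ∂μ) / μ (S i) / ε := by
        simp only [div_eq_mul_inv, mul_right_comm]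

variable {u : X → ℝ} {T T₁ T₂ t : ℝ}

theorem HasTrace.hasDensityZero_ge (hT : HasTrace μ l S u T) (hu : Measurable u) (ht : T < t) :
    HasDensityZero μ l S {y | t ≤ u y} :=
  (hasDensityZero_of_tendsto_setLIntegral_div (by fun_prop)
    (ENNReal.ofReal_pos.2 (sub_pos.2 ht)).ne' ENNReal.ofReal_ne_top hT).mono fun y hy =>
    ENNReal.ofReal_le_ofReal ((sub_le_sub_right hy T).trans (le_abs_self _))

theorem HasTrace.hasDensityZero_le (hT : HasTrace μ l S u T) (hu : Measurable u) (ht : t < T) :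
    HasDensityZero μ l S {y | u y ≤ t} :=
  (hasDensityZero_of_tendsto_setLIntegral_div (by fun_prop)
    (ENNReal.ofReal_pos.2 (sub_pos.2 ht)).ne' ENNReal.ofReal_ne_top hT).mono fun y hy =>
    ENNReal.ofReal_le_ofReal ((sub_le_sub_left hy T).trans (neg_sub (u y) T ▸ neg_le_abs _))

theorem hasDensityZero_gt_of_hasTrace (hu : Measurable u)
    (h₁ : HasTrace μ l (fun i => S i ∩ A) u T₁)
    (h₂ : HasTrace μ l (fun i => S i \ A) u T₂)
    (ht₁ : T₁ < t) (ht₂ : T₂ < t) : HasDensityZero μ l S {y | t < u y} :=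
  HasDensityZero.of_inter_of_diff (A := A)
    ((h₁.hasDensityZero_ge hu ht₁).mono (ofPred_subset_ofPred.2 fun _ => le_of_lt))
    ((h₂.hasDensityZero_ge hu ht₂).mono (ofPred_subset_ofPred.2 fun _ => le_of_lt))

theorem hasDensityZero_lt_of_hasTrace (hu : Measurable u)
    (h₁ : HasTrace μ l (fun i => S i ∩ A) u T₁)
    (h₂ : HasTrace μ l (fun i => S i \ A) u T₂)
    (ht₁ : t < T₁) (ht₂ : t < T₂) : HasDensityZero μ l S {y | u y < t} :=
  HasDensityZero.of_inter_of_diff (A := A)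
    ((h₁.hasDensityZero_le hu ht₁).mono (ofPred_subset_ofPred.2 fun _ => le_of_lt))
    ((h₂.hasDensityZero_le hu ht₂).mono (ofPred_subset_ofPred.2 fun _ => le_of_lt))

theorem HasTrace.le_of_hasDensityZero_gt [l.NeBot] (hT : HasTrace μ l (fun i => S i ∩ A) u T)
    (hu : Measurable u) (hA : 0 < liminf (fun i => μ (S i ∩ A) / μ (S i)) l)
    (ht : HasDensityZero μ l S {y | t < u y}) : T ≤ t := by
  by_contra! htT
  have hA₀ : HasDensityZero μ l S A :=
    HasDensityZero.of_compl_of_inter (measurableSet_le hu measurable_const)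
      (by simpa only [compl_ofPred, not_le] using ht) (hT.hasDensityZero_le hu htT)
  exact hA.ne' (Tendsto.liminf_eq hA₀)

theorem HasTrace.ge_of_hasDensityZero_lt [l.NeBot] (hT : HasTrace μ l (fun i => S i ∩ A) u T)
    (hu : Measurable u) (hA : 0 < liminf (fun i => μ (S i ∩ A) / μ (S i)) l)
    (ht : HasDensityZero μ l S {y | u y < t}) : t ≤ T := by
  by_contra! htT
  have hA₀ : HasDensityZero μ l S A :=
    HasDensityZero.of_compl_of_inter (measurableSet_le measurable_const hu)
      (by simpa only [compl_ofPred, not_le] using ht) (hT.hasDensityZero_ge hu htT)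
  exact hA.ne' (Tendsto.liminf_eq hA₀)

end

theorem stmt16_general {X : Type*} [PseudoMetricSpace X] [MeasurableSpace X]
    (μ : Measure X) (Ω : Set X)
    (u : X → ℝ) (hu : Measurable u) (x : X)
    -- positive lower density of `Ω` and of its complement at `x`
    (hdΩ : 0 < Filter.liminf
      (fun r : ℝ => μ (Metric.ball x r ∩ Ω) / μ (Metric.ball x r)) (nhdsWithin 0 (Set.Ioi 0)))
    (hdΩc : 0 < Filter.liminf
      (fun r : ℝ => μ (Metric.ball x r \ Ω) / μ (Metric.ball x r)) (nhdsWithin 0 (Set.Ioi 0)))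
    -- the interior trace `T₊u(x)` and exterior trace `T₋u(x)` exist
    (Tp Tm : ℝ)
    (hTp : Filter.Tendsto
      (fun r : ℝ => (∫⁻ y in Metric.ball x r ∩ Ω, ENNReal.ofReal |u y - Tp| ∂μ) /
        μ (Metric.ball x r ∩ Ω)) (nhdsWithin 0 (Set.Ioi 0)) (nhds 0))
    (hTm : Filter.Tendsto
      (fun r : ℝ => (∫⁻ y in Metric.ball x r \ Ω, ENNReal.ofReal |u y - Tm| ∂μ) /
        μ (Metric.ball x r \ Ω)) (nhdsWithin 0 (Set.Ioi 0)) (nhds 0)) :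
    ({sSup (lowerLevelSet μ u x), sInf (upperLevelSet μ u x)} : Set ℝ) = {Tm, Tp} := by
  have hTp' : HasTrace μ (𝓝[>] 0) (fun r => ball x r ∩ Ω) u Tp := hTp
  have hTm' : HasTrace μ (𝓝[>] 0) (fun r => ball x r ∩ Ωᶜ) u Tm := hTm
  have hIoi : Ioi (max Tm Tp) ⊆ upperLevelSet μ u x := fun t ht =>
    hasDensityZero_gt_of_hasTrace hu hTp hTm (max_lt_iff.1 ht).2 (max_lt_iff.1 ht).1
  have hIio : Iio (min Tm Tp) ⊆ lowerLevelSet μ u x := fun t ht =>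
    hasDensityZero_lt_of_hasTrace hu hTp hTm (lt_min_iff.1 ht).2 (lt_min_iff.1 ht).1
  have hup : IsGLB (upperLevelSet μ u x) (max Tm Tp) :=
    isGLB_Ioi.of_subset_of_superset isGLB_Ici hIoi fun t ht =>
      max_le (hTm'.le_of_hasDensityZero_gt hu hdΩc ht) (hTp'.le_of_hasDensityZero_gt hu hdΩ ht)
  have hlow : IsLUB (lowerLevelSet μ u x) (min Tm Tp) :=
    isLUB_Iio.of_subset_of_superset isLUB_Iic hIio fun t ht =>
      le_min (hTm'.ge_of_hasDensityZero_lt hu hdΩc ht) (hTp'.ge_of_hasDensityZero_lt hu hdΩ ht)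
  rw [hup.csInf_eq (nonempty_Ioi.mono hIoi), hlow.csSup_eq (nonempty_Iio.mono hIio)]
  rcases le_total Tm Tp with h | h
  · rw [min_eq_left h, max_eq_right h]
  · rw [min_eq_right h, max_eq_left h, pair_comm]

/-- At a point `x` where both `Ω` and its complement have positive lower density, if the
approximate limits `u^∧(x), u^∨(x)` exist and are finite and both one-sided traces `T₊u(x)`
(from `Ω`) and `T₋u(x)` (from `X∖Ω`) exist, then `{u^∧(x), u^∨(x)} = {T₋u(x), T₊u(x)}`. -/
theorem stmt16 {X : Type*} [PseudoMetricSpace X] [MeasurableSpace X]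
    (μ : Measure X) (Ω : Set X) (hΩ : MeasurableSet Ω)
    (u : X → ℝ) (hu : Measurable u) (x : X)
    (hball : ∀ r : ℝ, 0 < r → 0 < μ (Metric.ball x r) ∧ μ (Metric.ball x r) < ⊤)
    -- positive lower density of `Ω` and of its complement at `x`
    (hdΩ : 0 < Filter.liminf
      (fun r : ℝ => μ (Metric.ball x r ∩ Ω) / μ (Metric.ball x r)) (nhdsWithin 0 (Set.Ioi 0)))
    (hdΩc : 0 < Filter.liminf
      (fun r : ℝ => μ (Metric.ball x r \ Ω) / μ (Metric.ball x r)) (nhdsWithin 0 (Set.Ioi 0)))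
    -- `u^∧(x)` and `u^∨(x)` exist and are finite
    (h1ne : (lowerLevelSet μ u x).Nonempty) (h1bd : BddAbove (lowerLevelSet μ u x))
    (h2ne : (upperLevelSet μ u x).Nonempty) (h2bd : BddBelow (upperLevelSet μ u x))
    -- the interior trace `T₊u(x)` and exterior trace `T₋u(x)` exist
    (Tp Tm : ℝ)
    (hTp : Filter.Tendsto
      (fun r : ℝ => (∫⁻ y in Metric.ball x r ∩ Ω, ENNReal.ofReal |u y - Tp| ∂μ) /
        μ (Metric.ball x r ∩ Ω)) (nhdsWithin 0 (Set.Ioi 0)) (nhds 0))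
    (hTm : Filter.Tendsto
      (fun r : ℝ => (∫⁻ y in Metric.ball x r \ Ω, ENNReal.ofReal |u y - Tm| ∂μ) /
        μ (Metric.ball x r \ Ω)) (nhdsWithin 0 (Set.Ioi 0)) (nhds 0)) :
    ({sSup (lowerLevelSet μ u x), sInf (upperLevelSet μ u x)} : Set ℝ) = {Tm, Tp} :=
  stmt16_general μ Ω u hu x hdΩ hdΩc Tp Tm hTp hTm
end
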